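/- For every integer l ≥ 1, in the Loewner order on bounded self-adjoint operators on H₀ × H₀: Σ_M(l) ≤ Σ_R(1/(l+1)) ≤ max{(2l+1)/(l+1), (l+1)/l}·Σ_M(l); moreover Σ_M(l) ≤ ((l²+l+2+(l−1)√((l+1)²+1))/(2(l+1)))·Σ_D and Σ_D ≤ ((l²+l+2+(l−1)√((l+1)²+1))/(l+1)²)·Σ_M(l). -/

import Mathlib

/-!
All four operators are block operators `[[d I + a T², b T], [b T, c I]]`, and for self-adjoint `T`
the quadratic form of such an operator is `d‖f‖² + a‖Tf‖² + 2b⟪Tf, g⟫ + c‖g‖²`. By Cauchy–Schwarz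
it is nonnegative as soon as `a, c, d ≥ 0` and `b² ≤ ac`. The form is linear in the coefficients,
so each Loewner inequality `Σ₁ ≤ k Σ₂` reduces to these four scalar conditions on the
coefficients of `k Σ₂ - Σ₁`. In the comparisons with `Σ_D` the constants are exactly those that
make the difference degenerate: `b² = ac`.
-/

open scoped RealInnerProductSpace

/-- Quadratic form of the block operator `[[d•I + a•T², b•T], [b•T, c•I]]` on `H₀ × H₀`
(with the product inner product), evaluated at the vector `(f, g)`. -/
noncomputable def blockQuadForm {H₀ : Type*} [NormedAddCommGroup H₀] [InnerProductSpace ℝ H₀]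
    (T : H₀ →L[ℝ] H₀) (a b c d : ℝ) (f g : H₀) : ℝ :=
  ⟪f, d • f + a • T (T f) + b • T g⟫ + ⟪g, b • T f + c • g⟫

/-- Quadratic form of `Σ_D = [[2I + 4T², 2T], [2T, 2I]]`. -/
noncomputable def sigmaD {H₀ : Type*} [NormedAddCommGroup H₀] [InnerProductSpace ℝ H₀]
    (T : H₀ →L[ℝ] H₀) (f g : H₀) : ℝ :=
  blockQuadForm T 4 2 2 2 f g

/-- Quadratic form of
`Σ_R(r) = [[((2−r)/r)I + (2/(r(1−r)))T², (2/(1−r))T], [(2/(1−r))T, ((1+r)/(1−r))I]]`. -/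
noncomputable def sigmaR {H₀ : Type*} [NormedAddCommGroup H₀] [InnerProductSpace ℝ H₀]
    (T : H₀ →L[ℝ] H₀) (r : ℝ) (f g : H₀) : ℝ :=
  blockQuadForm T (2 / (r * (1 - r))) (2 / (1 - r)) ((1 + r) / (1 - r)) ((2 - r) / r) f g

/-- Quadratic form of `Σ_M(l) = [[(l+1)I + 2(l+1)T², 2T], [2T, ((l+3)/(l+1))I]]`. -/
noncomputable def sigmaM {H₀ : Type*} [NormedAddCommGroup H₀] [InnerProductSpace ℝ H₀]
    (T : H₀ →L[ℝ] H₀) (l : ℕ) (f g : H₀) : ℝ :=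
  blockQuadForm T (2 * ((l : ℝ) + 1)) 2 (((l : ℝ) + 3) / ((l : ℝ) + 1)) ((l : ℝ) + 1) f g

section BlockQuadForm

variable {H₀ : Type*} [NormedAddCommGroup H₀] [InnerProductSpace ℝ H₀] {T : H₀ →L[ℝ] H₀}

theorem blockQuadForm_sub (T : H₀ →L[ℝ] H₀) (a b c d a' b' c' d' : ℝ) (f g : H₀) :
    blockQuadForm T a' b' c' d' f g - blockQuadForm T a b c d f g =
      blockQuadForm T (a' - a) (b' - b) (c' - c) (d' - d) f g := by
  simp only [blockQuadForm, sub_smul, inner_add_right, inner_sub_right]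
  ring

theorem mul_blockQuadForm (T : H₀ →L[ℝ] H₀) (k a b c d : ℝ) (f g : H₀) :
    k * blockQuadForm T a b c d f g = blockQuadForm T (k * a) (k * b) (k * c) (k * d) f g := by
  simp only [blockQuadForm, mul_smul, inner_add_right, real_inner_smul_right]
  ring

theorem blockQuadForm_eq_of_isSymmetric (hT : (T : H₀ →ₗ[ℝ] H₀).IsSymmetric) (a b c d : ℝ)
    (f g : H₀) :
    blockQuadForm T a b c d f g =
      d * ‖f‖ ^ 2 + a * ‖T f‖ ^ 2 + 2 * b * ⟪T f, g⟫ + c * ‖g‖ ^ 2 := by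
  have hsymm : ∀ x y, ⟪T x, y⟫ = ⟪x, T y⟫ := hT
  have hTT : ⟪f, T (T f)⟫ = ‖T f‖ ^ 2 := by rw [← hsymm, real_inner_self_eq_norm_sq]
  simp only [blockQuadForm, inner_add_right, real_inner_smul_right, hTT, ← hsymm f g,
    real_inner_comm (T f) g, real_inner_self_eq_norm_sq]
  ring

theorem add_two_mul_add_nonneg_of_abs_le {a b c u v z : ℝ} (ha : 0 ≤ a) (hc : 0 ≤ c)
    (hb : b ^ 2 ≤ a * c) (hz : |z| ≤ u * v) :
    0 ≤ a * u ^ 2 + 2 * b * z + c * v ^ 2 := by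
  -- AM-GM: `(2 |b| u v)² ≤ 4 a c u² v² ≤ (a u² + c v²)²`
  have hamgm : (2 * |b| * (u * v)) ^ 2 ≤ (a * u ^ 2 + c * v ^ 2) ^ 2 := by
    nlinarith [mul_le_mul_of_nonneg_right hb (sq_nonneg (u * v)), sq_abs b,
      sq_nonneg (a * u ^ 2 - c * v ^ 2)]
  have hbz : |2 * b * z| ≤ 2 * |b| * (u * v) := by
    rw [abs_mul, abs_mul, abs_two, mul_assoc, mul_assoc]
    gcongr
  have := abs_le_of_sq_le_sq' hamgm (by positivity)
  linarith [neg_abs_le (2 * b * z)]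

theorem blockQuadForm_nonneg (hT : (T : H₀ →ₗ[ℝ] H₀).IsSymmetric) {a b c d : ℝ} (ha : 0 ≤ a)
    (hc : 0 ≤ c) (hd : 0 ≤ d) (hb : b ^ 2 ≤ a * c) (f g : H₀) :
    0 ≤ blockQuadForm T a b c d f g := by
  rw [blockQuadForm_eq_of_isSymmetric hT]
  have := add_two_mul_add_nonneg_of_abs_le ha hc hb (abs_real_inner_le_norm (T f) g)
  nlinarith [mul_nonneg hd (sq_nonneg ‖f‖)]

theorem blockQuadForm_le (hT : (T : H₀ →ₗ[ℝ] H₀).IsSymmetric) {a b c d a' b' c' d' : ℝ}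
    (ha : 0 ≤ a' - a) (hc : 0 ≤ c' - c) (hd : 0 ≤ d' - d)
    (hb : (b' - b) ^ 2 ≤ (a' - a) * (c' - c)) (f g : H₀) :
    blockQuadForm T a b c d f g ≤ blockQuadForm T a' b' c' d' f g := by
  rw [← sub_nonneg, blockQuadForm_sub]
  exact blockQuadForm_nonneg hT ha hc hd hb f g

end BlockQuadForm

section GibbsCovariances

variable {H₀ : Type*} [NormedAddCommGroup H₀] [InnerProductSpace ℝ H₀] {T : H₀ →L[ℝ] H₀}

theorem sigmaR_one_div_add_one (T : H₀ →L[ℝ] H₀) {x : ℝ} (hx : 0 < x) (f g : H₀) :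
    sigmaR T (1 / (x + 1)) f g =
      blockQuadForm T (2 * (x + 1) ^ 2 / x) (2 * (x + 1) / x) ((x + 2) / x) (2 * x + 1) f g := by
  have hx0 : x ≠ 0 := hx.ne'
  have hx1 : x + 1 ≠ 0 := by positivity
  rw [sigmaR, one_sub_div hx1, add_sub_cancel_right]
  congr 1 <;> field_simp <;> ring

theorem sigmaM_le_sigmaR (hT : (T : H₀ →ₗ[ℝ] H₀).IsSymmetric) {l : ℕ} (hl : 0 < l) (f g : H₀) :
    sigmaM T l f g ≤ sigmaR T (1 / ((l : ℝ) + 1)) f g := by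
  have hn : (0 : ℝ) < l := by exact_mod_cast hl
  rw [sigmaR_one_div_add_one T hn, sigmaM]
  have ea : 2 * ((l : ℝ) + 1) ^ 2 / l - 2 * (l + 1) = 2 * (l + 1) / l := by field_simp; ring
  have eb : 2 * ((l : ℝ) + 1) / l - 2 = 2 / l := by field_simp; ring
  have ec : ((l : ℝ) + 2) / l - (l + 3) / (l + 1) = 2 / (l * (l + 1)) := by field_simp; ring
  refine blockQuadForm_le hT ?_ ?_ ?_ ?_ f g
  · rw [ea]; positivity
  · rw [ec]; positivity
  · linarith
  · rw [ea, eb, ec]; field_simp; rfl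

theorem sigmaR_le_mul_sigmaM (hT : (T : H₀ →ₗ[ℝ] H₀).IsSymmetric) {l : ℕ} (hl : 0 < l) {k : ℝ}
    (hkd : (2 * (l : ℝ) + 1) / (l + 1) ≤ k) (hkb : ((l : ℝ) + 1) / l ≤ k) (f g : H₀) :
    sigmaR T (1 / ((l : ℝ) + 1)) f g ≤ k * sigmaM T l f g := by
  have hn : (0 : ℝ) < l := by exact_mod_cast hl
  rw [sigmaR_one_div_add_one T hn, sigmaM, mul_blockQuadForm]
  set p := k * l - (l + 1)
  have hp0 : 0 ≤ p := by rw [div_le_iff₀ hn] at hkb; linarith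
  have ea : k * (2 * ((l : ℝ) + 1)) - 2 * (l + 1) ^ 2 / l = 2 * (l + 1) * p / l := by
    field_simp; ring
  have eb : k * 2 - 2 * ((l : ℝ) + 1) / l = 2 * p / l := by field_simp; ring
  have ec : k * (((l : ℝ) + 3) / (l + 1)) - (l + 2) / l =
      ((l + 3) * p + (l + 1)) / (l * (l + 1)) := by
    field_simp; ring
  refine blockQuadForm_le hT ?_ ?_ ?_ ?_ f g
  · rw [ea]; positivity
  · rw [ec]; positivity
  · rw [div_le_iff₀ (by positivity)] at hkd; linarith
  · rw [ea, eb, ec, div_pow, div_mul_div_comm, div_le_div_iff₀ (by positivity) (by positivity)]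
    have : 2 * p ^ 2 ≤ p * ((l + 3) * p + (l + 1)) := by nlinarith
    nlinarith [mul_le_mul_of_nonneg_right this (by positivity : (0 : ℝ) ≤ 2 * l ^ 2 * (l + 1))]

theorem sigmaM_le_mul_sigmaD (hT : (T : H₀ →ₗ[ℝ] H₀).IsSymmetric) {l : ℕ} (hl : 1 ≤ l)
    (f g : H₀) :
    sigmaM T l f g ≤
      (((l : ℝ) ^ 2 + l + 2 + (l - 1) * √((l + 1) ^ 2 + 1)) / (2 * (l + 1))) * sigmaD T f g := by
  set n : ℝ := (l : ℝ)
  set s := √((n + 1) ^ 2 + 1)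
  have hs2 : s ^ 2 = (n + 1) ^ 2 + 1 := Real.sq_sqrt (by positivity)
  have hn : 0 < n + 1 := by positivity
  have hn1 : 0 ≤ n - 1 := by simp [n, hl]
  have hs1 : 0 ≤ s - 1 := by
    have : n + 1 ≤ s := Real.le_sqrt_of_sq_le (by linarith); linarith
  rw [sigmaD, sigmaM, mul_blockQuadForm]
  set k := (n ^ 2 + n + 2 + (n - 1) * s) / (2 * (n + 1)) with hk
  have ea : k * 4 - 2 * (n + 1) = 2 * ((n - 1) * (s - 1)) / (n + 1) := by
    rw [hk]; field_simp; ring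
  have eb : k * 2 - 2 = (n - 1) * (n + s) / (n + 1) := by rw [hk]; field_simp; ring
  have ec : k * 2 - (n + 3) / (n + 1) = (n - 1) * (n + 1 + s) / (n + 1) := by
    rw [hk]; field_simp; ring
  have ed : k * 2 - (n + 1) = (n - 1) * (s - 1) / (n + 1) := by rw [hk]; field_simp; ring
  have hdisc : ((n - 1) * (n + s)) ^ 2 = 2 * ((n - 1) * (s - 1)) * ((n - 1) * (n + 1 + s)) := by
    linear_combination (-(n - 1) ^ 2) * hs2
  refine blockQuadForm_le hT ?_ ?_ ?_ ?_ f g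
  · rw [ea]; have := mul_nonneg hn1 hs1; positivity
  · rw [ec]; have := mul_nonneg hn1 (by positivity : 0 ≤ n + 1 + s); positivity
  · rw [ed]; have := mul_nonneg hn1 hs1; positivity
  · rw [ea, eb, ec, div_pow, div_mul_div_comm, hdisc, sq]

theorem sigmaD_le_mul_sigmaM (hT : (T : H₀ →ₗ[ℝ] H₀).IsSymmetric) {l : ℕ} (hl : 1 ≤ l)
    (f g : H₀) :
    sigmaD T f g ≤
      (((l : ℝ) ^ 2 + l + 2 + (l - 1) * √((l + 1) ^ 2 + 1)) / ((l + 1) ^ 2)) * sigmaM T l f g := by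
  set n : ℝ := (l : ℝ)
  set s := √((n + 1) ^ 2 + 1)
  have hs2 : s ^ 2 = (n + 1) ^ 2 + 1 := Real.sq_sqrt (by positivity)
  have hn : 0 < n + 1 := by positivity
  have hn1 : 0 ≤ n - 1 := by simp [n, hl]
  have hs : n + 1 ≤ s := Real.le_sqrt_of_sq_le (by linarith)
  rw [sigmaD, sigmaM, mul_blockQuadForm]
  set k := (n ^ 2 + n + 2 + (n - 1) * s) / (n + 1) ^ 2 with hk
  have ea : k * (2 * (n + 1)) - 4 = 2 * ((n - 1) * (n + s)) / (n + 1) := by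
    rw [hk]; field_simp; ring
  have eb : k * 2 - 2 = 2 * ((n - 1) * (s - 1)) / (n + 1) ^ 2 := by rw [hk]; field_simp; ring
  have ec : k * ((n + 3) / (n + 1)) - 2 =
      (n - 1) * ((n + 3) * s - (n ^ 2 + 3 * n + 4)) / (n + 1) ^ 3 := by
    rw [hk]; field_simp; ring
  have ed : k * (n + 1) - 2 = (n - 1) * (n + s) / (n + 1) := by rw [hk]; field_simp; ring
  have hc : 0 ≤ (n + 3) * s - (n ^ 2 + 3 * n + 4) := by nlinarith
  have hdisc : (2 * ((n - 1) * (s - 1))) ^ 2 =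
      2 * ((n - 1) * (n + s)) * ((n - 1) * ((n + 3) * s - (n ^ 2 + 3 * n + 4))) := by
    linear_combination (-2 * (n + 1) * (n - 1) ^ 2) * hs2
  refine blockQuadForm_le hT ?_ ?_ ?_ ?_ f g
  · rw [ea]; have := mul_nonneg hn1 (by positivity : 0 ≤ n + s); positivity
  · rw [ec]; have := mul_nonneg hn1 hc; positivity
  · rw [ed]; have := mul_nonneg hn1 (by positivity : 0 ≤ n + s); positivity
  · rw [ea, eb, ec, div_pow, div_mul_div_comm, hdisc]
    exact le_of_eq (by ring)

end GibbsCovariances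

theorem stmt8 {H₀ : Type*} [NormedAddCommGroup H₀] [InnerProductSpace ℝ H₀] [CompleteSpace H₀]
    (T : H₀ →L[ℝ] H₀) (hT : IsSelfAdjoint T)
    (l : ℕ) (hl : 1 ≤ l) :
    (∀ f g : H₀, sigmaM T l f g ≤ sigmaR T (1 / ((l : ℝ) + 1)) f g) ∧
    (∀ f g : H₀, sigmaR T (1 / ((l : ℝ) + 1)) f g ≤
      max ((2 * (l : ℝ) + 1) / ((l : ℝ) + 1)) (((l : ℝ) + 1) / (l : ℝ)) * sigmaM T l f g) ∧
    (∀ f g : H₀, sigmaM T l f g ≤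
      (((l : ℝ) ^ 2 + (l : ℝ) + 2 + ((l : ℝ) - 1) * Real.sqrt (((l : ℝ) + 1) ^ 2 + 1)) /
        (2 * ((l : ℝ) + 1))) * sigmaD T f g) ∧
    (∀ f g : H₀, sigmaD T f g ≤
      (((l : ℝ) ^ 2 + (l : ℝ) + 2 + ((l : ℝ) - 1) * Real.sqrt (((l : ℝ) + 1) ^ 2 + 1)) /
        (((l : ℝ) + 1) ^ 2)) * sigmaM T l f g) := by
  have hsymm := hT.isSymmetric
  exact ⟨sigmaM_le_sigmaR hsymm hl,
    sigmaR_le_mul_sigmaM hsymm hl (le_max_left _ _) (le_max_right _ _),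
    sigmaM_le_mul_sigmaD hsymm hl, sigmaD_le_mul_sigmaM hsymm hl⟩
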